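/- Under unique solvability of the Neumann problem on [0,T], the Dirichlet problem on [0,T], and the periodic problem on [0,2T] with even-extended potential ã, the Green's functions satisfy G_N(t,s) + G_D(t,s) = 2·G_P(t,s) and G_N(t,s) − G_D(t,s) = 2·G_P(2T−t, s) for all (t,s) ∈ [0,T]×[0,T]. -/

import Mathlib

open Set MeasureTheory intervalIntegral

noncomputable def evenExt (T : ℝ) (f : ℝ → ℝ) : ℝ → ℝ :=
  fun t => if t ≤ T then f t else f (2 * T - t)

noncomputable def oddExt (T : ℝ) (f : ℝ → ℝ) : ℝ → ℝ :=
  fun t => if t ≤ T then f t else -f (2 * T - t)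

/-- `u` is a Carathéodory (W^{2,1}) solution of `u'' + a u = σ` on `[0, L]`:
`u` is `C¹` with derivative `u'`, and `u'` is absolutely continuous, being the
indefinite integral of `σ - a u` (so `u'' + a u = σ` a.e.). -/
def IsSolIcc (a σ : ℝ → ℝ) (L : ℝ) (u u' : ℝ → ℝ) : Prop :=
  (∀ t ∈ Icc (0:ℝ) L, HasDerivAt u (u' t) t) ∧
  (∀ t ∈ Icc (0:ℝ) L, u' t = u' 0 + ∫ s in (0:ℝ)..t, (σ s - a s * u s))

def PeriodicBC (L : ℝ) : (ℝ → ℝ) → (ℝ → ℝ) → Prop :=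
  fun u u' => u 0 = u L ∧ u' 0 = u' L

def AntiperiodicBC (L : ℝ) : (ℝ → ℝ) → (ℝ → ℝ) → Prop :=
  fun u u' => u 0 = -u L ∧ u' 0 = -u' L

def NeumannBC (L : ℝ) : (ℝ → ℝ) → (ℝ → ℝ) → Prop :=
  fun _ u' => u' 0 = 0 ∧ u' L = 0

def DirichletBC (L : ℝ) : (ℝ → ℝ) → (ℝ → ℝ) → Prop :=
  fun u _ => u 0 = 0 ∧ u L = 0

def Mixed1BC (L : ℝ) : (ℝ → ℝ) → (ℝ → ℝ) → Prop :=
  fun u u' => u' 0 = 0 ∧ u L = 0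

def Mixed2BC (L : ℝ) : (ℝ → ℝ) → (ℝ → ℝ) → Prop :=
  fun u u' => u 0 = 0 ∧ u' L = 0

/-- `G` is the Green's function of `u'' + a u = σ` on `[0, L]` with the boundary
conditions `BC`: for every integrable right-hand side `σ`, the function
`t ↦ ∫₀^L G(t,s) σ(s) ds` is a solution of the boundary value problem, and the
solution is unique (on `[0,L]`). -/
def IsGreen (a : ℝ → ℝ) (L : ℝ)
    (BC : (ℝ → ℝ) → (ℝ → ℝ) → Prop) (G : ℝ → ℝ → ℝ) : Prop :=
  ∀ σ : ℝ → ℝ, IntervalIntegrable σ volume 0 L →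
    (∃ w', IsSolIcc a σ L (fun t => ∫ s in (0:ℝ)..L, G t s * σ s) w' ∧
        BC (fun t => ∫ s in (0:ℝ)..L, G t s * σ s) w') ∧
    (∀ u₁ u₁' u₂ u₂', IsSolIcc a σ L u₁ u₁' → BC u₁ u₁' →
        IsSolIcc a σ L u₂ u₂' → BC u₂ u₂' → ∀ t ∈ Icc (0:ℝ) L, u₁ t = u₂ t)

/-- `lam` is an eigenvalue of `u'' + (a + lam) u = 0` on `[0, L]` with boundary
conditions `BC`: there is a nontrivial W^{2,1} solution. -/
def IsEigen (a : ℝ → ℝ) (L : ℝ)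
    (BC : (ℝ → ℝ) → (ℝ → ℝ) → Prop) (lam : ℝ) : Prop :=
  ∃ u u' : ℝ → ℝ, IsSolIcc (fun t => a t + lam) (fun _ => 0) L u u' ∧ BC u u' ∧
    ∃ t ∈ Icc (0:ℝ) L, u t ≠ 0

/-! Let `Rf(t) = f(2T - t)`. Because `ã` is invariant under `R`, if `v` is the periodic solution on
`[0, 2T]` with right-hand side `h`, then on `[0, T]` the function `v + Rv` solves the Neumann
problem with right-hand side `h + Rh`, and `v - Rv` solves the Dirichlet problem with right-hand side
`h - Rh`. For the even extension `h` of `σ` this gives `v = Rv = ∫ G_N σ`, for the odd extension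
`v = -Rv = ∫ G_D σ`. The sum of the two periodic solutions has right-hand side `2σ` on `[0, T]` and
`0` on `(T, 2T]`; evaluating it at `t` and at `2T - t` gives both identities tested against every
`σ`, and a continuous function orthogonal to all continuous `σ` vanishes. -/

lemma evenExt_two_mul_sub (T : ℝ) (f : ℝ → ℝ) (s : ℝ) :
    evenExt T f (2 * T - s) = evenExt T f s := by
  unfold evenExt
  split_ifs <;> first | rfl | (congr 1; linarith)

lemma oddExt_two_mul_sub (T : ℝ) (f : ℝ → ℝ) {s : ℝ} (hs : s ≠ T) :
    oddExt T f (2 * T - s) = -oddExt T f s := by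
  unfold oddExt
  split_ifs with h₁ h₂ h₂
  · exact absurd (le_antisymm h₂ (by linarith)) hs
  · rw [neg_neg]
  · rw [sub_sub_cancel]
  · linarith

lemma intervalIntegrable_of_eq_reflect {T : ℝ} (hT : 0 ≤ T) {f g F : ℝ → ℝ}
    (hf : IntervalIntegrable f volume 0 T) (hg : IntervalIntegrable g volume 0 T)
    (hle : ∀ s ≤ T, F s = f s) (hgt : ∀ s, T < s → F s = g (2 * T - s)) :
    IntervalIntegrable F volume 0 (2 * T) := by
  have hleft : IntervalIntegrable F volume 0 T :=
    hf.congr fun s hs => (hle s (by rw [uIoc_of_le hT] at hs; exact hs.2)).symm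
  have hright : IntervalIntegrable F volume T (2 * T) := by
    have hg' := hg.comp_sub_left (2 * T)
    rw [sub_zero, two_mul, add_sub_cancel_right, ← two_mul] at hg'
    exact hg'.symm.congr fun s hs =>
      (hgt s (by rw [uIoc_of_le (by linarith)] at hs; exact hs.1)).symm
  exact hleft.trans hright

lemma intervalIntegrable_evenExt {T : ℝ} (hT : 0 ≤ T) {f : ℝ → ℝ}
    (hf : IntervalIntegrable f volume 0 T) : IntervalIntegrable (evenExt T f) volume 0 (2 * T) :=
  intervalIntegrable_of_eq_reflect hT hf hf (fun _ hs => if_pos hs) fun _ hs => if_neg hs.not_ge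

lemma intervalIntegrable_oddExt {T : ℝ} (hT : 0 ≤ T) {f : ℝ → ℝ}
    (hf : IntervalIntegrable f volume 0 T) : IntervalIntegrable (oddExt T f) volume 0 (2 * T) :=
  intervalIntegrable_of_eq_reflect hT hf hf.neg (fun _ hs => if_pos hs) fun _ hs => if_neg hs.not_ge

namespace IsSolIcc

variable {a b σ τ u u' : ℝ → ℝ} {L : ℝ}

lemma intervalIntegrable_integrand (hL : 0 ≤ L) (ha : IntervalIntegrable a volume 0 L)
    (hσ : IntervalIntegrable σ volume 0 L) (h : IsSolIcc a σ L u u') :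
    IntervalIntegrable (fun s => σ s - a s * u s) volume 0 L := by
  refine hσ.sub (ha.mul_continuousOn ?_)
  rw [uIcc_of_le hL]
  exact fun t ht => (h.1 t ht).continuousAt.continuousWithinAt

lemma intervalIntegrable_integrand_of_mem (hL : 0 ≤ L) (ha : IntervalIntegrable a volume 0 L)
    (hσ : IntervalIntegrable σ volume 0 L) (h : IsSolIcc a σ L u u') {t : ℝ}
    (ht : t ∈ Icc 0 L) : IntervalIntegrable (fun s => σ s - a s * u s) volume 0 t :=
  (h.intervalIntegrable_integrand hL ha hσ).mono_set
    (uIcc_subset_uIcc_left (by rwa [uIcc_of_le hL]))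

lemma mono {L' : ℝ} (h : IsSolIcc a σ L u u') (hL' : L' ≤ L) : IsSolIcc a σ L' u u' :=
  have hsub : Icc 0 L' ⊆ Icc 0 L := Icc_subset_Icc_right hL'
  ⟨fun t ht => h.1 t (hsub ht), fun t ht => h.2 t (hsub ht)⟩

lemma congr (h : IsSolIcc a σ L u u') (hab : ∀ᵐ s, s ∈ Ioc 0 L → a s = b s)
    (hστ : ∀ᵐ s, s ∈ Ioc 0 L → σ s = τ s) : IsSolIcc b τ L u u' := by
  refine ⟨h.1, fun t ht => ?_⟩
  rw [h.2 t ht]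
  congr 1
  refine integral_congr_ae ?_
  filter_upwards [hab, hστ] with s has hστs hs
  rw [uIoc_of_le ht.1] at hs
  have hs' : s ∈ Ioc 0 L := ⟨hs.1, hs.2.trans ht.2⟩
  rw [has hs', hστs hs']

variable {σ₁ σ₂ u₁ u₁' u₂ u₂' : ℝ → ℝ}

lemma add (hL : 0 ≤ L) (ha : IntervalIntegrable a volume 0 L)
    (hσ₁ : IntervalIntegrable σ₁ volume 0 L) (hσ₂ : IntervalIntegrable σ₂ volume 0 L)
    (h₁ : IsSolIcc a σ₁ L u₁ u₁') (h₂ : IsSolIcc a σ₂ L u₂ u₂') :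
    IsSolIcc a (σ₁ + σ₂) L (u₁ + u₂) (u₁' + u₂') := by
  refine ⟨fun t ht => (h₁.1 t ht).add (h₂.1 t ht), fun t ht => ?_⟩
  have hsum := integral_add (h₁.intervalIntegrable_integrand_of_mem hL ha hσ₁ ht)
    (h₂.intervalIntegrable_integrand_of_mem hL ha hσ₂ ht)
  simp only [Pi.add_apply, h₁.2 t ht, h₂.2 t ht]
  rw [show (fun s => σ₁ s + σ₂ s - a s * (u₁ s + u₂ s)) =
    fun s => σ₁ s - a s * u₁ s + (σ₂ s - a s * u₂ s) by ext; ring, hsum]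
  ring

lemma sub (hL : 0 ≤ L) (ha : IntervalIntegrable a volume 0 L)
    (hσ₁ : IntervalIntegrable σ₁ volume 0 L) (hσ₂ : IntervalIntegrable σ₂ volume 0 L)
    (h₁ : IsSolIcc a σ₁ L u₁ u₁') (h₂ : IsSolIcc a σ₂ L u₂ u₂') :
    IsSolIcc a (σ₁ - σ₂) L (u₁ - u₂) (u₁' - u₂') := by
  refine ⟨fun t ht => (h₁.1 t ht).sub (h₂.1 t ht), fun t ht => ?_⟩
  have hdiff := integral_sub (h₁.intervalIntegrable_integrand_of_mem hL ha hσ₁ ht)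
    (h₂.intervalIntegrable_integrand_of_mem hL ha hσ₂ ht)
  simp only [Pi.sub_apply, h₁.2 t ht, h₂.2 t ht]
  rw [show (fun s => σ₁ s - σ₂ s - a s * (u₁ s - u₂ s)) =
    fun s => σ₁ s - a s * u₁ s - (σ₂ s - a s * u₂ s) by ext; ring, hdiff]
  ring

lemma reflect (hL : 0 ≤ L) (ha : IntervalIntegrable a volume 0 L)
    (hσ : IntervalIntegrable σ volume 0 L) (h : IsSolIcc a σ L u u') :
    IsSolIcc (fun s => a (L - s)) (fun s => σ (L - s)) L (fun t => u (L - t))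
      (fun t => -u' (L - t)) := by
  have hmem : ∀ t ∈ Icc 0 L, L - t ∈ Icc 0 L := fun t ht =>
    ⟨by linarith [ht.2], by linarith [ht.1]⟩
  refine ⟨fun t ht => (h.1 (L - t) (hmem t ht)).comp_const_sub L t, fun t ht => ?_⟩
  have hL' : L ∈ Icc 0 L := ⟨hL, le_rfl⟩
  have hsplit := integral_interval_sub_left (h.intervalIntegrable_integrand hL ha hσ)
    (h.intervalIntegrable_integrand_of_mem hL ha hσ (hmem t ht))
  have hcomp := integral_comp_sub_left (fun s => σ s - a s * u s) L (a := 0) (b := t)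
  simp only [sub_zero] at hcomp
  beta_reduce
  rw [sub_zero, hcomp, ← hsplit, h.2 (L - t) (hmem t ht), h.2 L hL']
  ring

end IsSolIcc

lemma IsGreen.eq_integral {a σ u u' : ℝ → ℝ} {L : ℝ} {BC : (ℝ → ℝ) → (ℝ → ℝ) → Prop}
    {G : ℝ → ℝ → ℝ} (hG : IsGreen a L BC G) (hσ : IntervalIntegrable σ volume 0 L)
    (hu : IsSolIcc a σ L u u') (hbc : BC u u') :
    ∀ t ∈ Icc 0 L, u t = ∫ s in (0:ℝ)..L, G t s * σ s := by
  obtain ⟨⟨w', hw, hwbc⟩, huniq⟩ := hG σ hσ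
  exact huniq _ _ _ _ hu hbc hw hwbc

section Symmetrization

variable {T : ℝ} {a S v v' : ℝ → ℝ} {G : ℝ → ℝ → ℝ}

lemma IsSolIcc.reflect_evenExt (hT : 0 ≤ T) (ha : IntervalIntegrable a volume 0 T)
    (hS : IntervalIntegrable S volume 0 (2 * T)) (hv : IsSolIcc (evenExt T a) S (2 * T) v v') :
    IsSolIcc (evenExt T a) (fun s => S (2 * T - s)) (2 * T) (fun t => v (2 * T - t))
      (fun t => -v' (2 * T - t)) := by
  simpa only [evenExt_two_mul_sub] using
    hv.reflect (by linarith) (intervalIntegrable_evenExt hT ha) hS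

lemma IsSolIcc.of_evenExt (hT : 0 ≤ T) (hv : IsSolIcc (evenExt T a) S (2 * T) v v') :
    IsSolIcc a S T v v' :=
  (hv.mono (by linarith)).congr (.of_forall fun _ hs => if_pos hs.2) (.of_forall fun _ _ => rfl)

lemma IntervalIntegrable.comp_two_mul_sub (hS : IntervalIntegrable S volume 0 (2 * T)) :
    IntervalIntegrable (fun s => S (2 * T - s)) volume 0 (2 * T) := by
  simpa only [sub_zero, sub_self] using (hS.comp_sub_left (2 * T)).symm

lemma add_reflect_eq_integral_of_isGreen_neumann (hT : 0 ≤ T)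
    (ha : IntervalIntegrable a volume 0 T) (hS : IntervalIntegrable S volume 0 (2 * T))
    (hG : IsGreen a T (NeumannBC T) G) (hv : IsSolIcc (evenExt T a) S (2 * T) v v')
    (hper : PeriodicBC (2 * T) v v') :
    ∀ t ∈ Icc 0 T, v t + v (2 * T - t) = ∫ s in (0:ℝ)..T, G t s * (S s + S (2 * T - s)) := by
  have hT2 : 0 ≤ 2 * T := by linarith
  have hsum := (hv.add hT2 (intervalIntegrable_evenExt hT ha) hS hS.comp_two_mul_sub
    (hv.reflect_evenExt hT ha hS)).of_evenExt hT
  refine hG.eq_integral ((hS.add hS.comp_two_mul_sub).mono_set ?_) hsum ⟨?_, ?_⟩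
  · rw [uIcc_of_le hT, uIcc_of_le hT2]
    exact Icc_subset_Icc_right (by linarith)
  · simp [hper.2]
  · simp [two_mul]

lemma sub_reflect_eq_integral_of_isGreen_dirichlet (hT : 0 ≤ T)
    (ha : IntervalIntegrable a volume 0 T) (hS : IntervalIntegrable S volume 0 (2 * T))
    (hG : IsGreen a T (DirichletBC T) G) (hv : IsSolIcc (evenExt T a) S (2 * T) v v')
    (hper : PeriodicBC (2 * T) v v') :
    ∀ t ∈ Icc 0 T, v t - v (2 * T - t) = ∫ s in (0:ℝ)..T, G t s * (S s - S (2 * T - s)) := by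
  have hT2 : 0 ≤ 2 * T := by linarith
  have hdiff := (hv.sub hT2 (intervalIntegrable_evenExt hT ha) hS hS.comp_two_mul_sub
    (hv.reflect_evenExt hT ha hS)).of_evenExt hT
  refine hG.eq_integral ((hS.sub hS.comp_two_mul_sub).mono_set ?_) hdiff ⟨?_, ?_⟩
  · rw [uIcc_of_le hT, uIcc_of_le hT2]
    exact Icc_subset_Icc_right (by linarith)
  · simp [hper.1]
  · simp [two_mul]

end Symmetrization

section PeriodicGreen

variable {T : ℝ} {a σ : ℝ → ℝ} {GN GD GP : ℝ → ℝ → ℝ}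

lemma integral_periodicGreen_mul_evenExt (hT : 0 ≤ T) (ha : IntervalIntegrable a volume 0 T)
    (hσ : IntervalIntegrable σ volume 0 T) (hGN : IsGreen a T (NeumannBC T) GN)
    (hGD : IsGreen a T (DirichletBC T) GD)
    (hGP : IsGreen (evenExt T a) (2 * T) (PeriodicBC (2 * T)) GP) {t : ℝ} (ht : t ∈ Icc 0 T) :
    (∫ s in (0:ℝ)..2 * T, GP t s * evenExt T σ s) = ∫ s in (0:ℝ)..T, GN t s * σ s ∧
      (∫ s in (0:ℝ)..2 * T, GP (2 * T - t) s * evenExt T σ s) = ∫ s in (0:ℝ)..T, GN t s * σ s := by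
  have hS := intervalIntegrable_evenExt hT hσ
  obtain ⟨⟨v', hv, hper⟩, -⟩ := hGP _ hS
  have hN := add_reflect_eq_integral_of_isGreen_neumann hT ha hS hGN hv hper t ht
  have hD := sub_reflect_eq_integral_of_isGreen_dirichlet hT ha hS hGD hv hper t ht
  have hsum : (∫ s in (0:ℝ)..T, GN t s * (evenExt T σ s + evenExt T σ (2 * T - s))) =
      2 * ∫ s in (0:ℝ)..T, GN t s * σ s := by
    rw [← intervalIntegral.integral_const_mul]
    refine integral_congr fun s hs => ?_
    rw [uIcc_of_le hT] at hs
    rw [evenExt_two_mul_sub]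
    simp only [evenExt, if_pos hs.2]
    ring
  simp only [evenExt_two_mul_sub, sub_self, mul_zero, intervalIntegral.integral_zero] at hD
  beta_reduce at hN hD
  constructor <;> linarith

lemma integral_periodicGreen_mul_oddExt (hT : 0 ≤ T) (ha : IntervalIntegrable a volume 0 T)
    (hσ : IntervalIntegrable σ volume 0 T) (hGN : IsGreen a T (NeumannBC T) GN)
    (hGD : IsGreen a T (DirichletBC T) GD)
    (hGP : IsGreen (evenExt T a) (2 * T) (PeriodicBC (2 * T)) GP) {t : ℝ} (ht : t ∈ Icc 0 T) :
    (∫ s in (0:ℝ)..2 * T, GP t s * oddExt T σ s) = ∫ s in (0:ℝ)..T, GD t s * σ s ∧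
      (∫ s in (0:ℝ)..2 * T, GP (2 * T - t) s * oddExt T σ s) =
        -∫ s in (0:ℝ)..T, GD t s * σ s := by
  have hS := intervalIntegrable_oddExt hT hσ
  obtain ⟨⟨v', hv, hper⟩, -⟩ := hGP _ hS
  have hN := add_reflect_eq_integral_of_isGreen_neumann hT ha hS hGN hv hper t ht
  have hD := sub_reflect_eq_integral_of_isGreen_dirichlet hT ha hS hGD hv hper t ht
  have hsum : (∫ s in (0:ℝ)..T, GN t s * (oddExt T σ s + oddExt T σ (2 * T - s))) = 0 := by
    refine (intervalIntegral.integral_congr_ae (g := fun _ => 0) ?_).trans intervalIntegral.integral_zero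
    filter_upwards [Measure.ae_ne volume T] with s hsT _
    rw [oddExt_two_mul_sub T σ hsT, add_neg_cancel, mul_zero]
  have hdiff : (∫ s in (0:ℝ)..T, GD t s * (oddExt T σ s - oddExt T σ (2 * T - s))) =
      2 * ∫ s in (0:ℝ)..T, GD t s * σ s := by
    rw [← intervalIntegral.integral_const_mul]
    refine integral_congr_ae ?_
    filter_upwards [Measure.ae_ne volume T] with s hsT hs
    rw [uIoc_of_le hT] at hs
    rw [oddExt_two_mul_sub T σ hsT]
    simp only [oddExt, if_pos hs.2]
    ring
  beta_reduce at hN hD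
  constructor <;> linarith

lemma integral_mul_evenExt_add_integral_mul_oddExt (hT : 0 ≤ T) {g : ℝ → ℝ}
    (hg : ContinuousOn g (Icc 0 (2 * T))) (hσ : IntervalIntegrable σ volume 0 T) :
    (∫ s in (0:ℝ)..2 * T, g s * evenExt T σ s) + (∫ s in (0:ℝ)..2 * T, g s * oddExt T σ s) =
      2 * ∫ s in (0:ℝ)..T, g s * σ s := by
  have hT2 : 0 ≤ 2 * T := by linarith
  have hmul : ∀ {F : ℝ → ℝ}, IntervalIntegrable F volume 0 (2 * T) →
      IntervalIntegrable (fun s => g s * F s) volume 0 (2 * T) :=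
    fun hF => hF.continuousOn_mul (by rwa [uIcc_of_le hT2])
  have hF := (hmul (intervalIntegrable_evenExt hT hσ)).add (hmul (intervalIntegrable_oddExt hT hσ))
  rw [← integral_add (hmul (intervalIntegrable_evenExt hT hσ))
    (hmul (intervalIntegrable_oddExt hT hσ)), ← integral_add_adjacent_intervals
    (hF.mono_set (uIcc_subset_uIcc_left (by rw [uIcc_of_le hT2]; exact ⟨hT, by linarith⟩)))
    (hF.mono_set (uIcc_subset_uIcc_right (by rw [uIcc_of_le hT2]; exact ⟨hT, by linarith⟩)))]
  have hleft : (∫ s in (0:ℝ)..T, g s * evenExt T σ s + g s * oddExt T σ s) =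
      2 * ∫ s in (0:ℝ)..T, g s * σ s := by
    rw [← intervalIntegral.integral_const_mul]
    refine integral_congr fun s hs => ?_
    rw [uIcc_of_le hT] at hs
    simp only [evenExt, oddExt, if_pos hs.2]
    ring
  have hright : (∫ s in T..2 * T, g s * evenExt T σ s + g s * oddExt T σ s) = 0 := by
    refine (intervalIntegral.integral_congr_ae (g := fun _ => 0) (.of_forall fun s hs => ?_)).trans
      intervalIntegral.integral_zero
    rw [uIoc_of_le (by linarith)] at hs
    simp only [evenExt, oddExt, if_neg hs.1.not_ge]
    ring
  rw [hleft, hright, add_zero]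

theorem integral_neumannGreen_add_dirichletGreen (hT : 0 ≤ T)
    (ha : IntervalIntegrable a volume 0 T)
    (hcP : ContinuousOn (fun p : ℝ × ℝ => GP p.1 p.2) (Icc (0:ℝ) (2 * T) ×ˢ Icc (0:ℝ) (2 * T)))
    (hGN : IsGreen a T (NeumannBC T) GN) (hGD : IsGreen a T (DirichletBC T) GD)
    (hGP : IsGreen (evenExt T a) (2 * T) (PeriodicBC (2 * T)) GP)
    (hσ : IntervalIntegrable σ volume 0 T) {t : ℝ} (ht : t ∈ Icc 0 T) :
    (∫ s in (0:ℝ)..T, GN t s * σ s) + (∫ s in (0:ℝ)..T, GD t s * σ s) =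
        2 * ∫ s in (0:ℝ)..T, GP t s * σ s ∧
      (∫ s in (0:ℝ)..T, GN t s * σ s) - (∫ s in (0:ℝ)..T, GD t s * σ s) =
        2 * ∫ s in (0:ℝ)..T, GP (2 * T - t) s * σ s := by
  obtain ⟨he, he'⟩ := integral_periodicGreen_mul_evenExt hT ha hσ hGN hGD hGP ht
  obtain ⟨ho, ho'⟩ := integral_periodicGreen_mul_oddExt hT ha hσ hGN hGD hGP ht
  have htP : t ∈ Icc 0 (2 * T) := ⟨ht.1, by linarith [ht.2]⟩
  have htP' : 2 * T - t ∈ Icc 0 (2 * T) := ⟨by linarith [ht.2], by linarith [ht.1]⟩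
  have hsplit := integral_mul_evenExt_add_integral_mul_oddExt hT (hcP.uncurry_left t htP) hσ
  have hsplit' := integral_mul_evenExt_add_integral_mul_oddExt hT (hcP.uncurry_left _ htP') hσ
  constructor <;> linarith

end PeriodicGreen

lemma eqOn_of_forall_integral_mul_eq {f g : ℝ → ℝ} {a b : ℝ} (hab : a < b)
    (hf : ContinuousOn f (Icc a b)) (hg : ContinuousOn g (Icc a b))
    (h : ∀ σ, ContinuousOn σ (Icc a b) → ∫ x in a..b, f x * σ x = ∫ x in a..b, g x * σ x) :
    EqOn f g (Icc a b) := by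
  intro c hc
  by_contra hne
  have hd : ContinuousOn (fun x => f x - g x) (Icc a b) := hf.sub hg
  have hpos : (∫ _ in a..b, (0:ℝ)) < ∫ x in a..b, (f x - g x) * (f x - g x) :=
    integral_lt_integral_of_continuousOn_of_le_of_exists_lt hab continuousOn_const (hd.mul hd)
      (fun x _ => mul_self_nonneg _) ⟨c, hc, mul_self_pos.2 (sub_ne_zero.2 hne)⟩
  have hzero : ∫ x in a..b, (f x - g x) * (f x - g x) = 0 := by
    simp only [sub_mul]
    have hfd : ContinuousOn (fun x => f x * (f x - g x)) (Icc a b) := hf.mul hd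
    have hgd : ContinuousOn (fun x => g x * (f x - g x)) (Icc a b) := hg.mul hd
    rw [integral_sub (hfd.intervalIntegrable_of_Icc hab.le) (hgd.intervalIntegrable_of_Icc hab.le),
      h _ hd, sub_self]
  rw [hzero, intervalIntegral.integral_zero] at hpos
  exact hpos.false

/-- `G_N + G_D = 2 G_P` and `G_N − G_D = 2 G_P(2T−·,·)` on `[0,T]²`. -/
theorem statement7 (T : ℝ) (hT : 0 < T) (a : ℝ → ℝ) (GN GD GP : ℝ → ℝ → ℝ)
    (ha : IntervalIntegrable a volume 0 T)
    (hcN : ContinuousOn (fun p : ℝ × ℝ => GN p.1 p.2) (Icc (0:ℝ) T ×ˢ Icc (0:ℝ) T))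
    (hcD : ContinuousOn (fun p : ℝ × ℝ => GD p.1 p.2) (Icc (0:ℝ) T ×ˢ Icc (0:ℝ) T))
    (hcP : ContinuousOn (fun p : ℝ × ℝ => GP p.1 p.2)
      (Icc (0:ℝ) (2 * T) ×ˢ Icc (0:ℝ) (2 * T)))
    (hGN : IsGreen a T (NeumannBC T) GN)
    (hGD : IsGreen a T (DirichletBC T) GD)
    (hGP : IsGreen (evenExt T a) (2 * T) (PeriodicBC (2 * T)) GP) :
    ∀ t ∈ Icc (0:ℝ) T, ∀ s ∈ Icc (0:ℝ) T,
      GN t s + GD t s = 2 * GP t s ∧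
      GN t s - GD t s = 2 * GP (2 * T - t) s := by
  intro t ht s hs
  have hsub : Icc 0 T ⊆ Icc 0 (2 * T) := Icc_subset_Icc_right (by linarith)
  have hN := hcN.uncurry_left t ht
  have hD := hcD.uncurry_left t ht
  have hP := (hcP.uncurry_left t (hsub ht)).mono hsub
  have htP' : 2 * T - t ∈ Icc 0 (2 * T) := ⟨by linarith [ht.2], by linarith [ht.1]⟩
  have hP' := (hcP.uncurry_left _ htP').mono hsub
  have hint : ∀ {F σ : ℝ → ℝ}, ContinuousOn F (Icc 0 T) → ContinuousOn σ (Icc 0 T) →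
      IntervalIntegrable (fun x => F x * σ x) volume 0 T :=
    fun hF hσ => (hF.mul hσ).intervalIntegrable_of_Icc hT.le
  have hid := fun σ (hσ : ContinuousOn σ (Icc 0 T)) => integral_neumannGreen_add_dirichletGreen
    hT.le ha hcP hGN hGD hGP (hσ.intervalIntegrable_of_Icc hT.le) ht
  refine ⟨eqOn_of_forall_integral_mul_eq (f := fun x => GN t x + GD t x)
      (g := fun x => 2 * GP t x) hT (hN.add hD) (continuousOn_const.mul hP) (fun σ hσ => ?_) hs,
    eqOn_of_forall_integral_mul_eq (f := fun x => GN t x - GD t x)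
      (g := fun x => 2 * GP (2 * T - t) x) hT (hN.sub hD) (continuousOn_const.mul hP')
      (fun σ hσ => ?_) hs⟩
  · simp only [add_mul, mul_assoc]
    rw [integral_add (hint hN hσ) (hint hD hσ), intervalIntegral.integral_const_mul, (hid σ hσ).1]
  · simp only [sub_mul, mul_assoc]
    rw [integral_sub (hint hN hσ) (hint hD hσ), intervalIntegral.integral_const_mul, (hid σ hσ).2]
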